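/- arXiv:0803.2477 — 8 statements merged into one kernel-verified Lean document; each statement's English description precedes it below -/
import Mathlib

section
/- Let K be a field of characteristic zero with a derivation D, and let F be a differential subfield of K. Let u₁, …, u_L ∈ K be nonzero elements each algebraic over F, let E = F(u₁, …, u_L) be the subfield of K generated by F and the u_i, and assume n = [E : F] is finite. Let v₁, …, v_M ∈ K be nonzero elements such that (D v_j)/v_j ∈ E for every j ∈ {1, …, M}, and set y = v₁ + ⋯ + v_M. Then for every strictly increasing sequence m₁ < m₂ < ⋯ < m_N of nonnegative integers with N ≥ n·M + 1, there exist r₁, …, r_N ∈ F, not all zero, such that Σ_{k=1}^{N} r_k · D^{m_k} y = 0. -/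
/-!
Every `D^k y` lies in the `E`-span `V` of `v₁, …, v_M`. Indeed `V` is stable under `D`: the
derivation preserves `E`, a finite, hence separable, extension of the differential field `F`,
and `D v_j = (D v_j / v_j) • v_j`. As an `F`-vector space `V` has dimension at most
`[E : F] · M < N`, so the `N` elements `D^{m_k} y` are linearly dependent over `F`.
-/

open Module Submodule Differential

def Derivation.restrictSubfield {K : Type*} [Field K] (d : Derivation ℤ K K) (F : Subfield K)
    (hF : ∀ a ∈ F, d a ∈ F) : Derivation ℤ F F :=
  .mk' (AddMonoidHom.mk' (fun a : F => (⟨d a, hF a a.2⟩ : F))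
      fun a b => Subtype.ext (d.map_add a b)).toIntLinearMap
    fun a b => Subtype.ext (d.leibniz (a : K) b)

theorem IntermediateField.deriv_mem_of_finiteDimensional {F K : Type*} [Field F] [CharZero F]
    [Differential F] [Field K] [Differential K] [Algebra F K] [DifferentialAlgebra F K]
    (E : IntermediateField F K) [FiniteDimensional F E] {x : K} (hx : x ∈ E) : x′ ∈ E :=
  -- `E` carries the unique derivation extending that of `F`, and `E → K` commutes with it.
  deriv_algebraMap (B := K) (⟨x, hx⟩ : E) ▸ (⟨x, hx⟩′ : E).2

theorem Derivation.apply_mem_of_finiteDimensional {K : Type*} [Field K] [CharZero K]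
    (d : Derivation ℤ K K) {F : Subfield K} (hF : ∀ a ∈ F, d a ∈ F)
    {E : IntermediateField F K} [FiniteDimensional F E] {x : K} (hx : x ∈ E) : d x ∈ E :=
  letI : Differential K := ⟨d⟩
  letI : Differential F := ⟨d.restrictSubfield F hF⟩
  haveI : DifferentialAlgebra F K := ⟨fun _ => rfl⟩
  E.deriv_mem_of_finiteDimensional hx

theorem Derivation.mapsTo_span {F K : Type*} [Field F] [Field K] [Algebra F K]
    (d : Derivation ℤ K K) (E : IntermediateField F K) (hE : ∀ x ∈ E, d x ∈ E) {s : Set K}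
    (hs : ∀ x ∈ s, d x ∈ span E s) : Set.MapsTo d (span E s) (span E s) := by
  intro z hz
  induction hz using Submodule.span_induction with
  | mem x hx => exact hs x hx
  | zero => simp
  | add x y _ _ hx hy => simpa using add_mem hx hy
  | smul e x hx hdx =>
    have h : d (e • x) = e • d x + (⟨d e, hE e e.2⟩ : E) • x := by
      simp only [Algebra.smul_def, leibniz]
      simp [IntermediateField.algebraMap_apply, mul_comm]
    rw [h]
    exact add_mem (smul_mem _ e hdx) (smul_mem _ _ hx)

theorem exists_ne_zero_sum_smul_eq_zero_of_mem_span {F E K : Type*} [Field F] [Field E]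
    [Field K] [Algebra F E] [Algebra E K] [Algebra F K] [IsScalarTower F E K]
    [FiniteDimensional F E] {ι κ : Type*} [Fintype ι] [Fintype κ] (v : κ → K) (z : ι → K)
    (hz : ∀ i, z i ∈ span E (Set.range v))
    (hcard : finrank F E * Fintype.card κ < Fintype.card ι) :
    ∃ r : ι → F, r ≠ 0 ∧ ∑ i, r i • z i = 0 := by
  let V := span E (Set.range v)
  have : Module.Finite E V := .span_of_finite E (Set.finite_range v)
  have : Module.Finite F V := .trans E V
  have hdim : finrank F V ≤ finrank F E * Fintype.card κ := by
    rw [← finrank_mul_finrank F E V]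
    exact Nat.mul_le_mul_left _ (finrank_range_le_card v)
  have hdep : ¬ LinearIndependent F (fun i => (⟨z i, hz i⟩ : V)) := fun hli =>
    (hli.fintype_card_le_finrank.trans hdim).not_gt hcard
  obtain ⟨r, hr, i, hi⟩ := Fintype.not_linearIndependent_iff.mp hdep
  exact ⟨r, Function.ne_iff.mpr ⟨i, hi⟩, by simpa using congrArg Subtype.val hr⟩

theorem joint_differential_resolvent_exists_general
    {K : Type*} [Field K] [CharZero K] (D : K → K)
    (hadd : ∀ a b : K, D (a + b) = D a + D b)
    (hleib : ∀ a b : K, D (a * b) = a * D b + D a * b)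
    (F : Subfield K) (hF : ∀ a ∈ F, D a ∈ F)
    {M : ℕ}
    (E : IntermediateField F K)
    (n : ℕ) (hfd : FiniteDimensional F E) (hn : n = Module.finrank F E)
    (v : Fin M → K) (hv : ∀ j, v j ≠ 0)
    (hlog : ∀ j, D (v j) / v j ∈ E)
    (y : K) (hy : y = ∑ j, v j)
    (N : ℕ) (hN : N ≥ n * M + 1)
    (m : Fin N → ℕ) :
    ∃ r : Fin N → K, (∀ k, r k ∈ F) ∧ (∃ k, r k ≠ 0) ∧
      ∑ k, r k * (D^[m k] y) = 0 := by
  let d : Derivation ℤ K K := .mk' (AddMonoidHom.mk' D hadd).toIntLinearMap fun a b => by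
    simpa [mul_comm] using hleib a b
  have hdE : ∀ x ∈ E, d x ∈ E := fun x hx => d.apply_mem_of_finiteDimensional hF hx
  have hstable : Set.MapsTo D (span E (Set.range v)) (span E (Set.range v)) := by
    refine d.mapsTo_span E hdE ?_
    rintro _ ⟨j, rfl⟩
    have hlog_mul : d (v j) = (⟨D (v j) / v j, hlog j⟩ : E) • v j :=
      (div_mul_cancel₀ _ (hv j)).symm
    exact hlog_mul ▸ smul_mem _ _ (subset_span ⟨j, rfl⟩)
  have hy_mem : y ∈ span E (Set.range v) := hy ▸ sum_mem fun j _ => subset_span ⟨j, rfl⟩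
  obtain ⟨r, hr, hrel⟩ := exists_ne_zero_sum_smul_eq_zero_of_mem_span (F := F) v
    (fun k => D^[m k] y) (fun k => hstable.iterate (m k) hy_mem) (by simpa [← hn] using hN)
  obtain ⟨k, hk⟩ := Function.ne_iff.mp hr
  exact ⟨fun k => r k, fun k => (r k).2, ⟨k, by simpa using hk⟩, hrel⟩

set_option synthInstance.maxHeartbeats 1000000 in
/-- Existence of a joint differential resolvent (Theorem 3.1, honest core). -/
theorem joint_differential_resolvent_exists
    {K : Type*} [Field K] [CharZero K] (D : K → K)
    (hadd : ∀ a b : K, D (a + b) = D a + D b)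
    (hleib : ∀ a b : K, D (a * b) = a * D b + D a * b)
    (F : Subfield K) (hF : ∀ a ∈ F, D a ∈ F)
    {L M : ℕ} (u : Fin L → K) (hu : ∀ i, u i ≠ 0)
    (halg : ∀ i, IsAlgebraic F (u i))
    (E : IntermediateField F K) (hE : E = IntermediateField.adjoin F (Set.range u))
    (n : ℕ) (hfd : FiniteDimensional F E) (hn : n = Module.finrank F E)
    (v : Fin M → K) (hv : ∀ j, v j ≠ 0)
    (hlog : ∀ j, D (v j) / v j ∈ E)
    (y : K) (hy : y = ∑ j, v j)
    (N : ℕ) (hN : N ≥ n * M + 1)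
    (m : Fin N → ℕ) (hm : StrictMono m) :
    ∃ r : Fin N → K, (∀ k, r k ∈ F) ∧ (∃ k, r k ≠ 0) ∧
      ∑ k, r k * (D^[m k] y) = 0 :=
  joint_differential_resolvent_exists_general D hadd hleib F hF E n hfd hn v hv hlog y hy N hN m
end

section
/- Let K be a field of characteristic zero with a derivation D, and let F be a differential subfield of K. Let u ∈ K be a nonzero element algebraic over F with n = [F(u) : F] finite. Let c ∈ K be a constant (D c = 0), and let v ∈ K be a nonzero element with D v = c · ((D u)/u) · v. Then there exist r₀, r₁, …, r_n in the subfield F(c) of K generated by F and c, not all zero, such that Σ_{k=0}^{n} r_k · D^k v = 0. -/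
/-!
`E = F(c)(u)` is a differential field: differentiating the minimal polynomial of `u` over the
differential field `F(c)` expresses `D u` in `F(c)(u)` (separability holds in characteristic
zero). Since `D v = a v` with `a = c · D u / u ∈ E`, induction gives `D^k v = w_k v` with
`w_k ∈ E`. The `n + 1` elements `w_0, …, w_n` of the `F(c)`-space `E`, whose dimension is at
most `[F(u) : F] = n`, are linearly dependent, and multiplying the relation by `v` gives the
resolvent.
-/

open Polynomial IntermediateField

namespace Derivation

section CommRing

variable {R A : Type*} [CommRing R] [CommRing A] [Algebra R A] (d : Derivation R A A)

def ofLeibniz (D : A → A) (hadd : ∀ a b, D (a + b) = D a + D b)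
    (hleib : ∀ a b, D (a * b) = a * D b + D a * b) : Derivation ℤ A A :=
  Derivation.mk' (AddMonoidHom.mk' D hadd).toIntLinearMap fun a b => by
    simp [hleib, mul_comm]

@[simp]
theorem coe_ofLeibniz (D : A → A) (hadd : ∀ a b, D (a + b) = D a + D b)
    (hleib : ∀ a b, D (a * b) = a * D b + D a * b) : ⇑(ofLeibniz D hadd hleib) = D := rfl

theorem apply_eval_eq_sum (x : A) (p : A[X]) :
    d (p.eval x) = p.sum (fun i a => d a * x ^ i) + (derivative p).eval x * d x := by
  induction p using Polynomial.induction_on' with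
  | add p q hp hq =>
    rw [eval_add, map_add, hp, hq, derivative_add, eval_add, sum_add_index _ _ _ (by simp)
      (fun _ _ _ => by rw [map_add, add_mul])]
    ring
  | monomial n a =>
    rw [eval_monomial, leibniz, leibniz_pow, derivative_monomial, eval_monomial,
      sum_monomial_index _ _ (by simp)]
    simp only [smul_eq_mul, nsmul_eq_mul]
    ring

theorem exists_iterate_eq_mul {S : Type*} [SetLike S A] [SubringClass S A] {E : S}
    (hE : Set.MapsTo d E E) {a v : A} (ha : a ∈ E) (hv : d v = a * v) (n : ℕ) :
    ∃ w ∈ E, d^[n] v = w * v := by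
  induction n with
  | zero => exact ⟨1, one_mem E, (one_mul v).symm⟩
  | succ n ih =>
    obtain ⟨w, hw, hwv⟩ := ih
    refine ⟨d w + w * a, add_mem (hE hw) (mul_mem hw ha), ?_⟩
    rw [Function.iterate_succ_apply', hwv, leibniz, hv, smul_eq_mul, smul_eq_mul]
    ring

end CommRing

section Field

variable {R k K : Type*} [CommRing R] [Field k] [Field K] [Algebra R K] [Algebra k K]
  (d : Derivation R K K)

theorem mapsTo_adjoin (hk : ∀ a : k, d (algebraMap k K a) ∈ (⊥ : IntermediateField k K))
    {S : Set K} (hS : ∀ s ∈ S, d s ∈ adjoin k S) :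
    Set.MapsTo d (adjoin k S) (adjoin k S) := by
  intro x hx
  induction hx using adjoin_induction with
  | mem x hx => exact hS x hx
  | algebraMap a => exact (bot_le : ⊥ ≤ adjoin k S) (hk a)
  | add x y _ _ hx hy => rw [map_add]; exact add_mem hx hy
  | mul x y hx' hy' hx hy =>
    rw [leibniz]; exact add_mem (mul_mem hx' hy) (mul_mem hy' hx)
  | inv x hx' hx => rw [leibniz_inv]; exact mul_mem (neg_mem (pow_mem (inv_mem hx') 2)) hx

theorem apply_mem_adjoin_simple
    (hk : ∀ a : k, d (algebraMap k K a) ∈ (⊥ : IntermediateField k K))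
    {x : K} (hx : IsSeparable k x) : d x ∈ k⟮x⟯ := by
  set p := (minpoly k x).map (algebraMap k K)
  have hp' : (derivative p).eval x ≠ 0 := by
    rw [derivative_map, eval_map_algebraMap]
    exact hx.aeval_derivative_ne_zero (minpoly.aeval k x)
  have hrel : p.sum (fun i a => d a * x ^ i) + (derivative p).eval x * d x = 0 := by
    rw [← apply_eval_eq_sum, eval_map_algebraMap, minpoly.aeval, map_zero]
  have hsum : p.sum (fun i a => d a * x ^ i) ∈ k⟮x⟯ :=
    sum_mem fun i _ => mul_mem ((bot_le : ⊥ ≤ k⟮x⟯) (by rw [coeff_map]; exact hk _))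
      (pow_mem (mem_adjoin_simple_self k x) i)
  have hp'mem : (derivative p).eval x ∈ k⟮x⟯ := by
    rw [derivative_map, eval_map_algebraMap]
    exact algebra_adjoin_le_adjoin k _ (aeval_mem_adjoin_singleton k x)
  have hdx : d x = -p.sum (fun i a => d a * x ^ i) / (derivative p).eval x := by
    field_simp
    linear_combination hrel
  rw [hdx]
  exact div_mem (neg_mem hsum) hp'mem

theorem exists_sum_smul_iterate_eq_zero {L : Type*} [Field L] [Algebra L K]
    {E : IntermediateField L K} {n : ℕ} (hn : Module.finrank L E ≤ n) [FiniteDimensional L E]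
    (hE : Set.MapsTo d E E) {a v : K} (ha : a ∈ E) (hv : d v = a * v) :
    ∃ r : Fin (n + 1) → L, (∃ i, r i ≠ 0) ∧ ∑ i, r i • d^[i] v = 0 := by
  choose w hwE hwv using d.exists_iterate_eq_mul hE ha hv
  have hdep : ¬LinearIndependent L fun i : Fin (n + 1) => (⟨w i, hwE i⟩ : E) := fun hli => by
    have := hli.fintype_card_le_finrank
    simp only [Fintype.card_fin] at this
    omega
  obtain ⟨r, hr, i, hi⟩ := Fintype.not_linearIndependent_iff.mp hdep
  refine ⟨r, ⟨i, hi⟩, ?_⟩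
  have hrw : ∑ i, r i • w i = 0 := by simpa using congrArg ((↑) : E → K) hr
  simp_rw [hwv, ← smul_mul_assoc, ← Finset.sum_mul, hrw, zero_mul]

end Field

end Derivation

theorem IntermediateField.finrank_adjoin_simple_le_of_isScalarTower {F L K : Type*} [Field F]
    [Field L] [Field K] [Algebra F L] [Algebra F K] [Algebra L K] [IsScalarTower F L K] {x : K}
    (hx : IsIntegral F x) : Module.finrank L L⟮x⟯ ≤ Module.finrank F F⟮x⟯ := by
  rw [adjoin.finrank hx, adjoin.finrank hx.tower_top]
  calc (minpoly L x).natDegree ≤ ((minpoly F x).map (algebraMap F L)).natDegree :=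
        natDegree_le_of_dvd (minpoly.dvd_map_of_isScalarTower F L x)
          (map_ne_zero (minpoly.ne_zero hx))
    _ = (minpoly F x).natDegree := natDegree_map _

theorem alpha_resolvent_exists_general
    {K : Type*} [Field K] [CharZero K] (D : K → K)
    (hadd : ∀ a b : K, D (a + b) = D a + D b)
    (hleib : ∀ a b : K, D (a * b) = a * D b + D a * b)
    (F : Subfield K) (hF : ∀ a ∈ F, D a ∈ F)
    (u : K) (halg : IsAlgebraic F u)
    (n : ℕ) (hn : n = Module.finrank F (IntermediateField.adjoin F ({u} : Set K)))
    (c : K) (hc : D c = 0)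
    (v : K) (hDv : D v = c * (D u / u) * v) :
    ∃ r : Fin (n + 1) → K,
      (∀ k, r k ∈ IntermediateField.adjoin F ({c} : Set K)) ∧
      (∃ k, r k ≠ 0) ∧
      ∑ k : Fin (n + 1), r k * (D^[(k : ℕ)] v) = 0 := by
  let d := Derivation.ofLeibniz D hadd hleib
  let Fc := F⟮c⟯
  have hFc : Set.MapsTo d Fc Fc := d.mapsTo_adjoin
    (fun a => mem_bot.mpr ⟨⟨_, hF a a.2⟩, rfl⟩) (by simp [d, hc])
  have hu : IsIntegral Fc u := halg.isIntegral.tower_top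
  have hFc' : ∀ a : Fc, d (algebraMap Fc K a) ∈ (⊥ : IntermediateField Fc K) :=
    fun a => mem_bot.mpr ⟨⟨_, hFc a.2⟩, rfl⟩
  have hDu : d u ∈ Fc⟮u⟯ := d.apply_mem_adjoin_simple hFc' (minpoly.irreducible hu).separable
  have hE : Set.MapsTo d Fc⟮u⟯ Fc⟮u⟯ := d.mapsTo_adjoin hFc' (by simpa using hDu)
  have : FiniteDimensional Fc (Fc⟮u⟯) := adjoin.finiteDimensional hu
  have hrank : Module.finrank Fc Fc⟮u⟯ ≤ n :=
    hn ▸ finrank_adjoin_simple_le_of_isScalarTower halg.isIntegral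
  have hcE : c ∈ Fc⟮u⟯ :=
    IntermediateField.algebraMap_mem _ (⟨c, mem_adjoin_simple_self F c⟩ : Fc)
  have hcu : c * (D u / u) ∈ Fc⟮u⟯ := mul_mem hcE (div_mem hDu (mem_adjoin_simple_self Fc u))
  obtain ⟨r, ⟨i, hi⟩, hr⟩ := d.exists_sum_smul_iterate_eq_zero hrank hE hcu hDv
  exact ⟨fun k => r k, fun k => (r k).2, ⟨i, by simpa using hi⟩, hr⟩

set_option synthInstance.maxHeartbeats 1000000 in
/-- Existence of a single-polynomial α-resolvent: `v` plays the role of `u^c`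
for a constant `c`, and a nontrivial relation `Σ_{k=0}^{n} r_k · D^k v = 0` exists with
coefficients in `F(c)`, where `n = [F(u) : F]`. -/
theorem alpha_resolvent_exists
    {K : Type*} [Field K] [CharZero K] (D : K → K)
    (hadd : ∀ a b : K, D (a + b) = D a + D b)
    (hleib : ∀ a b : K, D (a * b) = a * D b + D a * b)
    (F : Subfield K) (hF : ∀ a ∈ F, D a ∈ F)
    (u : K) (hu : u ≠ 0) (halg : IsAlgebraic F u)
    (n : ℕ) (hn : n = Module.finrank F (IntermediateField.adjoin F ({u} : Set K)))
    (c : K) (hc : D c = 0)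
    (v : K) (hv : v ≠ 0) (hDv : D v = c * (D u / u) * v) :
    ∃ r : Fin (n + 1) → K,
      (∀ k, r k ∈ IntermediateField.adjoin F ({c} : Set K)) ∧
      (∃ k, r k ≠ 0) ∧
      ∑ k : Fin (n + 1), r k * (D^[(k : ℕ)] v) = 0 :=
  alpha_resolvent_exists_general D hadd hleib F hF u halg n hn c hc v hDv
end

section
/- Let K be a field of characteristic zero with a derivation D, and let C = {c ∈ K : D c = 0} be its field of constants. Let u₁, …, u_n ∈ K be linearly independent over C. Suppose h₀, h₁, …, h_n ∈ K are not all zero, g₀, g₁, …, g_n ∈ K, and for every i ∈ {1, …, n} both Σ_{k=0}^{n} h_k · D^k u_i = 0 and Σ_{k=0}^{n} g_k · D^k u_i = 0. Then there exists Θ ∈ K such that g_k = Θ · h_k for every k ∈ {0, 1, …, n}. -/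
/-!
The rows `(u i, D (u i), …, D^n (u i))` of the `n × (n + 1)` Wronskian-type matrix are linearly
independent over `K`: a nontrivial `K`-relation among them can be normalised to have a coefficient
equal to `1`; differentiating it produces a relation with strictly smaller support, so a relation of
minimal support has constant coefficients, contradicting independence over the constants. Hence
the kernel of the matrix is a line, and `h` and `g` both lie on it.
-/

open Finset Matrix Module

namespace Matrix

variable {m n K : Type*} [Field K] [Fintype m] [Fintype n]

theorem finrank_ker_mulVecLin_of_linearIndependent_row {M : Matrix m n K}
    (hM : LinearIndependent K M.row) :
    finrank K (LinearMap.ker M.mulVecLin) = Fintype.card n - Fintype.card m := by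
  have := LinearMap.finrank_range_add_finrank_ker M.mulVecLin
  rw [finrank_fintype_fun_eq_card] at this
  have hrank : finrank K (LinearMap.range M.mulVecLin) = Fintype.card m := hM.rank_matrix
  omega

theorem exists_smul_eq_of_mulVec_eq_zero {M : Matrix m n K} (hM : LinearIndependent K M.row)
    (hcard : Fintype.card n = Fintype.card m + 1) {v w : n → K} (hv : v ≠ 0)
    (hMv : M *ᵥ v = 0) (hMw : M *ᵥ w = 0) : ∃ a : K, w = a • v := by
  have hker : finrank K (LinearMap.ker M.mulVecLin) = 1 := by
    rw [finrank_ker_mulVecLin_of_linearIndependent_row hM, hcard, Nat.add_sub_cancel_left]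
  obtain ⟨a, ha⟩ := (finrank_eq_one_iff_of_nonzero' (⟨v, hMv⟩ : LinearMap.ker M.mulVecLin)
    fun h => hv (congrArg Subtype.val h)).mp hker ⟨w, hMw⟩
  exact ⟨a, congrArg Subtype.val ha.symm⟩

end Matrix

section Wronskian

variable {R K ι : Type*} [CommRing R] [Field K] [Algebra R K] (δ : Derivation R K K)
  [Fintype ι]

def wronskianMatrix (u : ι → K) (m : ℕ) : Matrix ι (Fin m) K :=
  Matrix.of fun i k => δ^[k] (u i)

variable {δ}

theorem sum_deriv_mul_iterate_eq_zero {c u : ι → K} {k : ℕ}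
    (h₀ : ∑ i, c i * δ^[k] (u i) = 0) (h₁ : ∑ i, c i * δ^[k + 1] (u i) = 0) :
    ∑ i, δ (c i) * δ^[k] (u i) = 0 := by
  have hδ := congrArg δ h₀
  simp only [map_sum, Derivation.leibniz, smul_eq_mul, map_zero, sum_add_distrib] at hδ
  simp only [Function.iterate_succ_apply'] at h₁
  simpa only [h₁, zero_add, mul_comm] using hδ

open scoped Classical in
theorem exists_const_relation_of_iterate_relation (u : ι → K) (m : ℕ) (c : ι → K) (hc : c ≠ 0)
    (hsupp : #{i | c i ≠ 0} ≤ m) (hrel : ∀ k < m, ∑ i, c i * δ^[k] (u i) = 0) :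
    ∃ d : ι → K, d ≠ 0 ∧ (∀ i, δ (d i) = 0) ∧ ∑ i, d i * u i = 0 := by
  induction m generalizing c with
  | zero =>
    obtain ⟨i, hi⟩ := Function.ne_iff.mp hc
    exact absurd hsupp (by simpa [card_eq_zero, filter_eq_empty_iff] using ⟨i, hi⟩)
  | succ m ih =>
    obtain ⟨j, hj⟩ : ∃ j, c j ≠ 0 := Function.ne_iff.mp hc
    set c' : ι → K := fun i => (c j)⁻¹ * c i
    have hc'j : c' j = 1 := inv_mul_cancel₀ hj
    have hrel' : ∀ k < m + 1, ∑ i, c' i * δ^[k] (u i) = 0 := fun k hk => by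
      simp only [c', mul_assoc, ← mul_sum, hrel k hk, mul_zero]
    by_cases hconst : ∀ i, δ (c' i) = 0
    · refine ⟨c', Function.ne_iff.mpr ⟨j, by simp [hc'j]⟩, hconst, ?_⟩
      simpa using hrel' 0 m.succ_pos
    · have hsupp' : #{i | δ (c' i) ≠ 0} < #{i | c i ≠ 0} := by
        have hsub : univ.filter (fun i => δ (c' i) ≠ 0) ⊆ univ.filter (fun i => c i ≠ 0) :=
          monotone_filter_right _ fun i _ hδ hci => hδ (by simp [c', hci])
        exact card_lt_card <| (ssubset_iff_of_subset hsub).mpr ⟨j, by simp [hj], by simp [hc'j]⟩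
      exact ih (fun i => δ (c' i)) (by simpa [funext_iff] using hconst) (by omega)
        fun k hk => sum_deriv_mul_iterate_eq_zero (hrel' k (by omega)) (hrel' (k + 1) (by omega))

theorem linearIndependent_row_wronskianMatrix (C : Subfield K) (hC : ∀ x, δ x = 0 → x ∈ C)
    {u : ι → K} (hu : LinearIndependent C u) {m : ℕ} (hm : Fintype.card ι ≤ m) :
    LinearIndependent K (wronskianMatrix δ u m).row := by
  classical
  rw [Fintype.linearIndependent_iff]
  intro c hc
  by_contra! hne
  have hrel : ∀ k < m, ∑ i, c i * δ^[k] (u i) = 0 := fun k hk => by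
    simpa [wronskianMatrix, Matrix.row] using congrFun hc ⟨k, hk⟩
  obtain ⟨d, hd, hdconst, hdrel⟩ := exists_const_relation_of_iterate_relation u m c
    (Function.ne_iff.mpr hne) ((card_le_univ _).trans hm) hrel
  have hdC : (fun i => (⟨d i, hC _ (hdconst i)⟩ : C)) = 0 :=
    funext (Fintype.linearIndependent_iff.mp hu _ hdrel)
  exact hd (funext fun i => congrArg Subtype.val (congrFun hdC i))

end Wronskian

def derivationOfLeibniz {K : Type*} [Field K] (D : K → K)
    (hadd : ∀ a b : K, D (a + b) = D a + D b)
    (hleib : ∀ a b : K, D (a * b) = a * D b + D a * b) : Derivation ℤ K K :=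
  Derivation.mk' (AddMonoidHom.mk' D hadd).toIntLinearMap fun a b => by
    simp [hleib, mul_comm]

theorem operators_differ_by_common_factor_general
    {K : Type*} [Field K] (D : K → K)
    (hadd : ∀ a b : K, D (a + b) = D a + D b)
    (hleib : ∀ a b : K, D (a * b) = a * D b + D a * b)
    (C : Subfield K) (hC : ∀ x : K, x ∈ C ↔ D x = 0)
    {n : ℕ} (u : Fin n → K) (hli : LinearIndependent C u)
    (h g : Fin (n + 1) → K) (hne : ∃ k, h k ≠ 0)
    (hh : ∀ i, ∑ k : Fin (n + 1), h k * (D^[(k : ℕ)] (u i)) = 0)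
    (hg : ∀ i, ∑ k : Fin (n + 1), g k * (D^[(k : ℕ)] (u i)) = 0) :
    ∃ Θ : K, ∀ k, g k = Θ * h k := by
  set δ := derivationOfLeibniz D hadd hleib
  set W := wronskianMatrix δ u (n + 1)
  have hW : LinearIndependent K W.row :=
    linearIndependent_row_wronskianMatrix C (fun x => (hC x).mpr) hli (by simp)
  have hker : ∀ a : Fin (n + 1) → K, (∀ i, ∑ k, a k * D^[(k : ℕ)] (u i) = 0) → W *ᵥ a = 0 :=
    fun a ha => funext fun i => by
      simpa [W, δ, wronskianMatrix, derivationOfLeibniz, dotProduct, Matrix.mulVec, mul_comm]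
        using ha i
  obtain ⟨Θ, hΘ⟩ := Matrix.exists_smul_eq_of_mulVec_eq_zero hW (by simp)
    (Function.ne_iff.mpr hne) (hker h hh) (hker g hg)
  exact ⟨Θ, fun k => congrFun hΘ k⟩

set_option synthInstance.maxHeartbeats 1000000 in
/-- Two `n`-th order linear differential operators annihilating `n` solutions
which are linearly independent over the constants differ by a common factor `Θ`. -/
theorem operators_differ_by_common_factor
    {K : Type*} [Field K] [CharZero K] (D : K → K)
    (hadd : ∀ a b : K, D (a + b) = D a + D b)
    (hleib : ∀ a b : K, D (a * b) = a * D b + D a * b)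
    (C : Subfield K) (hC : ∀ x : K, x ∈ C ↔ D x = 0)
    {n : ℕ} (u : Fin n → K) (hli : LinearIndependent C u)
    (h g : Fin (n + 1) → K) (hne : ∃ k, h k ≠ 0)
    (hh : ∀ i, ∑ k : Fin (n + 1), h k * (D^[(k : ℕ)] (u i)) = 0)
    (hg : ∀ i, ∑ k : Fin (n + 1), g k * (D^[(k : ℕ)] (u i)) = 0) :
    ∃ Θ : K, ∀ k, g k = Θ * h k :=
  operators_differ_by_common_factor_general D hadd hleib C hC u hli h g hne hh hg
end

section
/- Let K be a field of characteristic zero with a derivation D. Suppose t, u, w ∈ K satisfy t ≠ 0, u ≠ 0, D t = 1, D u = u, and D w = t⁻¹. Then every differential subfield F of K that contains both u + w and u·w also contains t, u, and w. -/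
/-!
Since `D u = u`, the Leibniz rule gives `D (u * x) - u * x = u * D x`, so a differential subfield
containing `u * x` also contains `u * D x`. Starting from `u * w` this yields `u / t`, and then
`u * D t⁻¹ = -u / t ^ 2`; their quotient is `t`, whence `u = (u / t) * t` and `w = (u + w) - u`.
-/

section Leibniz

variable {R : Type*} {D : R → R}

theorem leibniz_map_one [Ring R] (hleib : ∀ a b : R, D (a * b) = a * D b + D a * b) :
    D 1 = 0 := by
  have h := hleib 1 1
  rw [one_mul, mul_one, one_mul] at h
  simpa using h

theorem leibniz_map_inv [Field R] (hleib : ∀ a b : R, D (a * b) = a * D b + D a * b)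
    {a : R} (ha : a ≠ 0) : D a⁻¹ = -(D a / a ^ 2) := by
  have h := hleib a a⁻¹
  rw [mul_inv_cancel₀ ha, leibniz_map_one hleib] at h
  calc D a⁻¹ = a⁻¹ * (a * D a⁻¹) := (inv_mul_cancel_left₀ ha _).symm
    _ = -(D a / a ^ 2) := by
      rw [show a * D a⁻¹ = -(D a * a⁻¹) by linear_combination -h]
      ring

theorem mul_map_mem_of_mul_mem [Field R] (hleib : ∀ a b : R, D (a * b) = a * D b + D a * b)
    {F : Subfield R} (hDF : ∀ a ∈ F, D a ∈ F) {u x : R} (hDu : D u = u) (hux : u * x ∈ F) :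
    u * D x ∈ F := by
  have h := F.sub_mem (hDF _ hux) hux
  rwa [hleib, hDu, add_sub_cancel_right] at h

end Leibniz

theorem differential_subfield_contains_generators_general
    {K : Type*} [Field K] (D : K → K)
    (hleib : ∀ a b : K, D (a * b) = a * D b + D a * b)
    (t u w : K) (ht : t ≠ 0) (hu : u ≠ 0)
    (hDt : D t = 1) (hDu : D u = u) (hDw : D w = t⁻¹) :
    ∀ F : Subfield K, (∀ a ∈ F, D a ∈ F) →
      u + w ∈ F → u * w ∈ F → t ∈ F ∧ u ∈ F ∧ w ∈ F := by
  intro F hDF hs hp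
  have hut : u * t⁻¹ ∈ F := hDw ▸ mul_map_mem_of_mul_mem hleib hDF hDu hp
  have hut2 : u * (t ^ 2)⁻¹ ∈ F := by
    simpa [leibniz_map_inv hleib ht, hDt] using mul_map_mem_of_mul_mem hleib hDF hDu hut
  have htF : t ∈ F := by
    convert F.div_mem hut hut2 using 1
    field_simp
  have huF : u ∈ F := by
    convert F.mul_mem hut htF using 1
    field_simp
  exact ⟨htF, huF, by simpa using F.sub_mem hs huF⟩

/-- abstracting Example 1.1: with `t = x`, `u = eˣ`, `w = ln x`, any
differential subfield containing `u + w` and `u·w` also contains `t`, `u`, and `w`. -/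
theorem differential_subfield_contains_generators
    {K : Type*} [Field K] [CharZero K] (D : K → K)
    (hadd : ∀ a b : K, D (a + b) = D a + D b)
    (hleib : ∀ a b : K, D (a * b) = a * D b + D a * b)
    (t u w : K) (ht : t ≠ 0) (hu : u ≠ 0)
    (hDt : D t = 1) (hDu : D u = u) (hDw : D w = t⁻¹) :
    ∀ F : Subfield K, (∀ a ∈ F, D a ∈ F) →
      u + w ∈ F → u * w ∈ F → t ∈ F ∧ u ∈ F ∧ w ∈ F :=
  differential_subfield_contains_generators_general D hleib t u w ht hu hDt hDu hDw
end

section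
/- Let K be a field of characteristic 3 with a derivation D. Let x, z ∈ K satisfy D x = 1 and z³ + x·z − 1 = 0. Then z ≠ 0, and for every integer n one has x·D(zⁿ) + n·zⁿ = 0, where zⁿ denotes the integer power of z in K. -/
/-!
Differentiating the cubic gives
`D (z³) + x·D z + z = 0`; in characteristic 3 the first term vanishes, so `x·D z = -z`.
The Leibniz rule for integer powers, `D (zⁿ) = n·zⁿ⁻¹·D z`, then gives `x·D (zⁿ) = -n·zⁿ`.
-/

namespace Derivation

def ofAddLeibniz {A : Type*} [CommRing A] (D : A → A) (hadd : ∀ a b, D (a + b) = D a + D b)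
    (hleib : ∀ a b, D (a * b) = a * D b + D a * b) : Derivation ℤ A A :=
  mk' (AddMonoidHom.mk' D hadd).toIntLinearMap fun a b => by
    simp only [AddMonoidHom.coe_toIntLinearMap, AddMonoidHom.mk'_apply, smul_eq_mul, hleib,
      mul_comm b]

@[simp]
theorem coe_ofAddLeibniz {A : Type*} [CommRing A] (D : A → A) (hadd hleib) :
    ⇑(ofAddLeibniz D hadd hleib) = D :=
  rfl

variable {R A : Type*} [CommRing R] [CommRing A] [Algebra R A]

theorem map_pow_char_eq_zero (p : ℕ) [CharP A p] (D : Derivation R A A) (a : A) :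
    D (a ^ p) = 0 := by
  rw [leibniz_pow, ← Nat.cast_smul_eq_nsmul A, CharP.cast_eq_zero, zero_smul]

theorem mul_map_zpow_eq {K : Type*} [Field K] [Algebra R K] (D : Derivation R K K)
    {x z c : K} (hz : z ≠ 0) (h : x * D z = c * z) (n : ℤ) :
    x * D (z ^ n) = n * c * z ^ n := by
  calc x * D (z ^ n) = n * z ^ (n - 1) * (x * D z) := by
        rw [leibniz_zpow, ← Int.cast_smul_eq_zsmul K, smul_eq_mul, smul_eq_mul]; ring
    _ = n * c * (z ^ (n - 1) * z) := by rw [h]; ring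
    _ = n * c * z ^ n := by rw [← zpow_add_one₀ hz, sub_add_cancel]

end Derivation

theorem mul_map_eq_neg_of_cubic_root {K : Type*} [Field K] [CharP K 3] {R : Type*} [CommRing R]
    [Algebra R K] (D : Derivation R K K) {x z : K} (hx : D x = 1)
    (hz : z ^ 3 + x * z - 1 = 0) : x * D z = -z := by
  have h := congrArg D hz
  rw [map_sub, map_add, D.leibniz, D.map_pow_char_eq_zero 3, hx, D.map_one_eq_zero,
    map_zero] at h
  simp only [smul_eq_mul] at h
  linear_combination h

/-- Example 1.5: `x·D + n` annihilates `zⁿ` for every integer `n`, where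
`z` is a root of `t³ + x·t − 1` in a differential field of characteristic 3. -/
theorem char_three_resolvent_integer_powers
    {K : Type*} [Field K] [CharP K 3] (D : K → K)
    (hadd : ∀ a b : K, D (a + b) = D a + D b)
    (hleib : ∀ a b : K, D (a * b) = a * D b + D a * b)
    (x z : K) (hx : D x = 1) (hz : z ^ 3 + x * z - 1 = 0) :
    z ≠ 0 ∧ ∀ n : ℤ, x * D (z ^ n) + (n : K) * z ^ n = 0 := by
  set D' := Derivation.ofAddLeibniz D hadd hleib
  have hz0 : z ≠ 0 := by
    rintro rfl
    simp at hz
  have hDz : x * D' z = -1 * z := by rw [mul_map_eq_neg_of_cubic_root D' hx hz, neg_one_mul]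
  refine ⟨hz0, fun n => ?_⟩
  have hDzn := D'.mul_map_zpow_eq hz0 hDz n
  simp only [D', Derivation.coe_ofAddLeibniz] at hDzn
  linear_combination hDzn
end

section
/- Let m be a natural number with m ≥ 2. Let z : ℝ → ℝ be differentiable with z(x) > 0 for every x ∈ ℝ, and let f₁, f₂, f₃ : ℝ → ℝ. Suppose that for every α ∈ ℝ and every x ∈ ℝ, f₁(x) · deriv (t ↦ z(t)^α) x + (f₂(x) + f₃(x)·α^m) · z(x)^α = 0, where z(t)^α is the real power. Then for every x ∈ ℝ one has f₁(x)·(deriv z x) = 0, f₂(x) = 0, and f₃(x) = 0; in particular, if f₁ vanishes nowhere then deriv z x = 0 for all x. -/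
/-!
Fix `x` and write `w = z x > 0`. Since `D (z^α) = α z^(α-1) D z`, dividing the resolvent
identity by `w^α` leaves `(f₁ x * D z x / w) α + f₂ x + f₃ x α^m = 0` for every `α`. For `m ≥ 2`
the monomials `α`, `1`, `α^m` are linearly independent, which is already visible at
`α = 0, 1, 2`: this forces all three coefficients to vanish.
-/

theorem eq_zero_of_forall_mul_add_add_mul_pow_eq_zero {m : ℕ} (hm : 2 ≤ m) {p q r : ℝ}
    (h : ∀ α : ℝ, p * α + q + r * α ^ m = 0) : p = 0 ∧ q = 0 ∧ r = 0 := by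
  have h0 := h 0
  have h1 := h 1
  have h2 := h 2
  simp only [mul_zero, zero_add, zero_pow (by omega : m ≠ 0), add_zero, mul_one, one_pow]
    at h0 h1 h2
  have h2m : (2 : ℝ) < 2 ^ m := by
    calc (2 : ℝ) < 2 ^ 2 := by norm_num
      _ ≤ 2 ^ m := pow_le_pow_right₀ (by norm_num) hm
  have hr : r * (2 ^ m - 2) = 0 := by linear_combination h2 - 2 * h1 + h0
  have hr0 : r = 0 := (mul_eq_zero.mp hr).resolve_right (by linarith)
  exact ⟨by linarith, h0, hr0⟩

theorem mul_add_add_mul_pow_eq_zero_of_resolvent {z : ℝ → ℝ} {x : ℝ}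
    (hz : DifferentiableAt ℝ z x) (hzx : 0 < z x) {a b c : ℝ} {m : ℕ} (α : ℝ)
    (h : a * deriv (fun t : ℝ => z t ^ α) x + (b + c * α ^ m) * z x ^ α = 0) :
    a * deriv z x / z x * α + b + c * α ^ m = 0 := by
  rw [deriv_rpow_const hz (Or.inl hzx.ne'), Real.rpow_sub_one hzx.ne'] at h
  have hpow : 0 < z x ^ α := Real.rpow_pos_of_pos hzx α
  field_simp at h
  have hw := (mul_eq_zero.mp (h.trans (mul_zero _))).resolve_left hpow.ne'
  field_simp
  linear_combination hw

/-- Example 1.6: no α-resolvent of the form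
`f₁·D z^α + (f₂ + f₃·α^m)·z^α = 0` exists with `m ≥ 2` unless the coefficients vanish;
in particular if `f₁` vanishes nowhere then `z` is constant. -/
theorem no_resolvent_with_alpha_power
    (m : ℕ) (hm : 2 ≤ m)
    (z : ℝ → ℝ) (hz : Differentiable ℝ z) (hzpos : ∀ x : ℝ, 0 < z x)
    (f₁ f₂ f₃ : ℝ → ℝ)
    (h : ∀ α x : ℝ,
      f₁ x * deriv (fun t : ℝ => z t ^ α) x + (f₂ x + f₃ x * α ^ m) * z x ^ α = 0) :
    (∀ x : ℝ, f₁ x * deriv z x = 0 ∧ f₂ x = 0 ∧ f₃ x = 0) ∧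
    ((∀ x : ℝ, f₁ x ≠ 0) → ∀ x : ℝ, deriv z x = 0) := by
  have coeffs (x : ℝ) : f₁ x * deriv z x = 0 ∧ f₂ x = 0 ∧ f₃ x = 0 := by
    obtain ⟨hp, hq, hr⟩ := eq_zero_of_forall_mul_add_add_mul_pow_eq_zero hm fun α =>
      mul_add_add_mul_pow_eq_zero_of_resolvent (hz x) (hzpos x) α (h α x)
    exact ⟨(div_eq_zero_iff.mp hp).resolve_right (hzpos x).ne', hq, hr⟩
  exact ⟨coeffs, fun hf₁ x => (mul_eq_zero.mp (coeffs x).1).resolve_left (hf₁ x)⟩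
end

section
/- For all real numbers α, β and every real x > 0, let y : ℝ → ℝ be the function y(t) = t^α + (t+1)^β (real powers). Then ((α−β)·x + α) · x · (x+1) · (iteratedDeriv 2 y) x + ((α − α² − β + β²)·x² + (α − α²)·(2x+1)) · (deriv y) x + ((α−β)·x + (α−1)) · α · β · y(x) = 0. -/
/-!
The second-order operator `jointResolvent α β` of (6.7) annihilates each summand of `y`
separately: on `t ^ α` and on `(t + 1) ^ β` its coefficients collapse to polynomial identities
in `x, α, β` once every power is written as a multiple of `t ^ (α - 2)`, resp. `(t + 1) ^ (β - 2)`.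
Being linear, it then annihilates the sum.
-/
noncomputable def jointResolvent (α β : ℝ) (f : ℝ → ℝ) (x : ℝ) : ℝ :=
  ((α - β) * x + α) * x * (x + 1) * iteratedDeriv 2 f x
    + ((α - α ^ 2 - β + β ^ 2) * x ^ 2 + (α - α ^ 2) * (2 * x + 1)) * deriv f x
    + ((α - β) * x + (α - 1)) * α * β * f x

theorem iteratedDeriv_two_rpow_const (p x : ℝ) :
    iteratedDeriv 2 (fun t : ℝ => t ^ p) x = p * (p - 1) * x ^ (p - 2) := by
  rw [iteratedDeriv_eq_iterate, Real.iter_deriv_rpow_const]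
  simp [descPochhammer_succ_right]

theorem iteratedDeriv_two_rpow_add_const (p c x : ℝ) :
    iteratedDeriv 2 (fun t : ℝ => (t + c) ^ p) x = p * (p - 1) * (x + c) ^ (p - 2) := by
  rw [iteratedDeriv_comp_add_const 2 (fun t : ℝ => t ^ p)]
  exact iteratedDeriv_two_rpow_const p (x + c)

theorem deriv_rpow_add_const (p c x : ℝ) :
    deriv (fun t : ℝ => (t + c) ^ p) x = p * (x + c) ^ (p - 1) := by
  rw [deriv_comp_add_const (fun t : ℝ => t ^ p), Real.deriv_rpow_const]

theorem jointResolvent_add {α β x : ℝ} {f g : ℝ → ℝ} (hf : ContDiffAt ℝ 2 f x)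
    (hg : ContDiffAt ℝ 2 g x) :
    jointResolvent α β (fun t => f t + g t) x =
      jointResolvent α β f x + jointResolvent α β g x := by
  unfold jointResolvent
  rw [iteratedDeriv_fun_add hf hg,
    deriv_fun_add (hf.differentiableAt two_ne_zero) (hg.differentiableAt two_ne_zero)]
  ring

theorem jointResolvent_rpow {α x : ℝ} (β : ℝ) (hx : x ≠ 0) :
    jointResolvent α β (fun t => t ^ α) x = 0 := by
  unfold jointResolvent
  rw [iteratedDeriv_two_rpow_const, Real.deriv_rpow_const, show α - 2 = α - 1 - 1 by ring,
    Real.rpow_sub_one hx, Real.rpow_sub_one hx]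
  field_simp
  ring

theorem jointResolvent_rpow_add_one {β x : ℝ} (α : ℝ) (hx : x + 1 ≠ 0) :
    jointResolvent α β (fun t => (t + 1) ^ β) x = 0 := by
  unfold jointResolvent
  rw [iteratedDeriv_two_rpow_add_const, deriv_rpow_add_const, show β - 2 = β - 1 - 1 by ring,
    Real.rpow_sub_one hx, Real.rpow_sub_one hx]
  field_simp
  ring

/-- Example 6.1, equation (6.7): the explicit joint second-order
differential resolvent for `y(t) = t^α + (t+1)^β`. -/
theorem joint_resolvent_explicit
    (α β : ℝ) (x : ℝ) (hx : 0 < x)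
    (y : ℝ → ℝ) (hy : y = fun t : ℝ => t ^ α + (t + 1) ^ β) :
    ((α - β) * x + α) * x * (x + 1) * iteratedDeriv 2 y x
      + ((α - α ^ 2 - β + β ^ 2) * x ^ 2 + (α - α ^ 2) * (2 * x + 1)) * deriv y x
      + ((α - β) * x + (α - 1)) * α * β * y x = 0 := by
  subst hy
  have hx1 : x + 1 ≠ 0 := by positivity
  have hz : ContDiffAt ℝ 2 (fun t : ℝ => t ^ α) x := Real.contDiffAt_rpow_const_of_ne hx.ne'
  have hv : ContDiffAt ℝ 2 (fun t : ℝ => (t + 1) ^ β) x :=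
    (Real.contDiffAt_rpow_const_of_ne hx1).comp x (contDiffAt_id.add contDiffAt_const)
  change jointResolvent α β _ x = 0
  rw [jointResolvent_add hz hv, jointResolvent_rpow β hx.ne', jointResolvent_rpow_add_one α hx1,
    add_zero]
end

section
/- There exist five polynomials P₂, Q₁, R₁, Q₀, R₀ in three variables with rational coefficients, not all the zero polynomial, such that for every α ∈ ℝ, every x > 1, and each of the two functions y₁(t) = exp(α·t) and y₂(t) = (log t)^α (real power), one has P₂(x, eˣ, log x) · (iteratedDeriv 2 y) x + (Q₁(x, eˣ, log x) + R₁(x, eˣ, log x)·α) · (deriv y) x + (Q₀(x, eˣ, log x)·α + R₀(x, eˣ, log x)·α²) · y(x) = 0 for y = y₁ and for y = y₂. -/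
/-!
Both test functions are powers `u ^ α` of a root `u` of `(t - eˣ)(t - ln x)`, so they satisfy
`y' = g y` with `g = α u'/u`, namely `g = α` for `u = eˣ` and `g = α / (x ln x)` for `u = ln x`.
Then `y'' = (g' + g²) y`, and applying the operator to `y` multiplies `y` by the scalar
`P₂ (g' + g²) + (Q₁ + R₁ α) g + Q₀ α + R₀ α²`, which vanishes identically for both choices of `g`.
-/

open Real Filter Topology

theorem iteratedDeriv_two_eq_of_hasDerivAt_mul_self {y g : ℝ → ℝ} {x g' : ℝ}
    (hy : ∀ᶠ t in 𝓝 x, HasDerivAt y (g t * y t) t) (hg : HasDerivAt g g' x) :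
    iteratedDeriv 2 y x = (g' + g x ^ 2) * y x := by
  have hderiv : deriv y =ᶠ[𝓝 x] fun t => g t * y t := hy.mono fun t ht => ht.deriv
  rw [iteratedDeriv_succ, iteratedDeriv_one, hderiv.deriv_eq]
  exact (hg.mul hy.self_of_nhds).deriv.trans (by ring)

theorem linear_second_order_apply_eq_of_hasDerivAt_mul_self {y g : ℝ → ℝ} {x g' : ℝ}
    (p q r : ℝ) (hy : ∀ᶠ t in 𝓝 x, HasDerivAt y (g t * y t) t) (hg : HasDerivAt g g' x) :
    p * iteratedDeriv 2 y x + q * deriv y x + r * y x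
      = (p * (g' + g x ^ 2) + q * g x + r) * y x := by
  rw [iteratedDeriv_two_eq_of_hasDerivAt_mul_self hy hg, hy.self_of_nhds.deriv]
  ring

theorem hasDerivAt_log_rpow (α : ℝ) {t : ℝ} (ht : t ≠ 0) (hlog : log t ≠ 0) :
    HasDerivAt (fun s => log s ^ α) (α / (t * log t) * log t ^ α) t := by
  refine ((hasDerivAt_log ht).rpow_const (p := α) (Or.inl hlog)).congr_deriv ?_
  rw [rpow_sub_one hlog]
  field_simp

theorem hasDerivAt_div_mul_log (α : ℝ) {t : ℝ} (ht : t ≠ 0) (hlog : log t ≠ 0) :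
    HasDerivAt (fun s => α / (s * log s)) (-α * (log t + 1) / (t * log t) ^ 2) t := by
  refine ((hasDerivAt_const t α).fun_div ((hasDerivAt_id' t).fun_mul (hasDerivAt_log ht))
    (mul_ne_zero ht hlog)).congr_deriv ?_
  field_simp
  ring

/-- Example 1.2: the quadratic with roots `eˣ` and `ln x` admits a
second-order differential α-resolvent whose coefficient-functions are rational-coefficient
polynomials in `x`, `eˣ`, `ln x`, independent of `α`. -/
theorem second_order_alpha_resolvent_exists :
    ∃ P₂ Q₁ R₁ Q₀ R₀ : MvPolynomial (Fin 3) ℚ,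
      ¬(P₂ = 0 ∧ Q₁ = 0 ∧ R₁ = 0 ∧ Q₀ = 0 ∧ R₀ = 0) ∧
      ∀ (α x : ℝ), 1 < x →
        ∀ y : ℝ → ℝ,
          (y = fun t : ℝ => Real.exp (α * t)) ∨ (y = fun t : ℝ => Real.log t ^ α) →
          (MvPolynomial.aeval ![x, Real.exp x, Real.log x]) P₂ * iteratedDeriv 2 y x
          + ((MvPolynomial.aeval ![x, Real.exp x, Real.log x]) Q₁
              + (MvPolynomial.aeval ![x, Real.exp x, Real.log x]) R₁ * α) * deriv y x
          + ((MvPolynomial.aeval ![x, Real.exp x, Real.log x]) Q₀ * α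
              + (MvPolynomial.aeval ![x, Real.exp x, Real.log x]) R₀ * α ^ 2) * y x
          = 0 := by
  open MvPolynomial in
  refine ⟨X 0 * X 2 * (X 0 * X 2 - 1), -(1 + X 2), 1 - (X 0 * X 2) ^ 2, 1 + X 2,
    X 0 * X 2 - 1, fun ⟨_, _, _, hQ₀, _⟩ => by simpa using congrArg (eval 0) hQ₀, ?_⟩
  intro α x hx y hy
  have hx₀ : x ≠ 0 := by positivity
  have hlog : log x ≠ 0 := (log_pos hx).ne'
  simp only [map_sub, map_add, map_mul, map_one, map_pow, map_neg, MvPolynomial.aeval_X,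
    Matrix.cons_val_zero, Matrix.cons_val_two, Matrix.tail_cons, Matrix.head_cons]
  rcases hy with rfl | rfl
  · have hy : ∀ t, HasDerivAt (fun s => exp (α * s)) (α * exp (α * t)) t := fun t => by
      simpa [mul_comm] using ((hasDerivAt_id t).const_mul α).exp
    rw [linear_second_order_apply_eq_of_hasDerivAt_mul_self _ _ _
      (.of_forall hy) (hasDerivAt_const x α)]
    ring
  · have hy : ∀ᶠ t in 𝓝 x, HasDerivAt (fun s => log s ^ α) (α / (t * log t) * log t ^ α) t :=
      (eventually_gt_nhds hx).mono fun t ht =>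
        hasDerivAt_log_rpow α (one_pos.trans ht).ne' (log_pos ht).ne'
    rw [linear_second_order_apply_eq_of_hasDerivAt_mul_self _ _ _ hy
      (hasDerivAt_div_mul_log α hx₀ hlog)]
    field_simp
    ring
end
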